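/- Let q ∈ (2,4), α > 0 and λ ∈ ℝ. Let u : [0,∞) → ℝ be continuous with u(x) > 0 for all x ≥ 0, continuously differentiable on (0,∞), with ∫₀^∞ u(x)² g(x) dx < ∞ and ∫₀^∞ u'(x)² g(x) dx < ∞. Assume that x ↦ g(x)u'(x) extends to a continuous function on [0,∞) which is differentiable on (0,1) ∪ (1,∞) with (g(x)u'(x))' = λ g(x) u(x) there, that the right derivative u'(0⁺) exists and satisfies 4 u'(0⁺) = −α u(0)^{q−1}, and that lim_{x→∞} g(x)u(x) = 0 and lim_{x→∞} g(x)u'(x) = 0. Then (α²/16) u(0)^{2q−2} = λ u(0)² + λ ∫₀^∞ u(x)² g(x) dx − 4λ ∫₀¹ u(x)² dx. -/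

import Mathlib

/-!
With `G = g u'` the flux, the Pohozaev quantity `G² − λ (g u)²` has derivative
`−2λ g' g u²`, since `G' = λ g u`. It is therefore constant on `[0, 1]`, where `g ≡ 4`, and
decreases by `16λ ∫ u² g` along `(1, ∞)`, where `g' = 8`, down to its limit `0` at infinity.
Its value at `0` is `16 u'(0⁺)² − 16λ u(0)²`, and the boundary condition turns
`16 u'(0⁺)²` into `α² u(0)^{2q−2}`.
-/

open MeasureTheory Set

/-- The weight `g(x) = 4` for `x ≤ 1` and `g(x) = 4(2x−1)` for `x > 1`. -/
noncomputable def g (x : ℝ) : ℝ := if x ≤ 1 then 4 else 4 * (2 * x - 1)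

/-- `u` belongs to the weighted Sobolev space `H¹(ℝ⁺, g dx)` with derivative
`u'`: it is locally absolutely continuous on `[0,∞)` (primitive of `u'`) and
both `u² g` and `u'² g` are integrable on `(0,∞)`. -/
def InH1g (u u' : ℝ → ℝ) : Prop :=
  IntegrableOn (fun x => (u x) ^ 2 * g x) (Ioi 0) ∧
    IntegrableOn (fun x => (u' x) ^ 2 * g x) (Ioi 0) ∧
    ∀ a b : ℝ, 0 ≤ a → 0 ≤ b → u b - u a = ∫ x in a..b, u' x

/-- The weighted mass `∫₀^∞ u² g dx`. -/
noncomputable def massg (u : ℝ → ℝ) : ℝ := ∫ x in Ioi (0 : ℝ), (u x) ^ 2 * g x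

/-- The reduced energy `Ẽ_{q,α}(u) = (1/2)∫₀^∞ u'² g dx − (α/q)|u(0)|^q`. -/
noncomputable def energyg (q α : ℝ) (u u' : ℝ → ℝ) : ℝ :=
  (1 / 2) * (∫ x in Ioi (0 : ℝ), (u' x) ^ 2 * g x) - (α / q) * |u 0| ^ q

/-- The set of reduced energies over `X_μ = {u : 0 < ∫ u² g ≤ μ}`;
its infimum is `𝓔̃_{q,α}(μ)`. -/
def levelSetg (q α μ : ℝ) : Set ℝ :=
  {E | ∃ u u' : ℝ → ℝ, InH1g u u' ∧ 0 < massg u ∧ massg u ≤ μ ∧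
    E = energyg q α u u'}

open Filter Topology

lemma g_of_le {x : ℝ} (h : x ≤ 1) : g x = 4 := if_pos h

lemma g_of_one_lt {x : ℝ} (h : 1 < x) : g x = 4 * (2 * x - 1) := if_neg h.not_ge

lemma continuous_g : Continuous g :=
  continuous_const.if_le (by fun_prop) continuous_id continuous_const
    fun x hx => by rw [hx]; norm_num

lemma hasDerivAt_g_of_lt_one {x : ℝ} (h : x < 1) : HasDerivAt g 0 x :=
  (hasDerivAt_const x (4 : ℝ)).congr_of_eventuallyEq <| by
    filter_upwards [Iio_mem_nhds h] with y hy using g_of_le hy.le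

lemma hasDerivAt_g_of_one_lt {x : ℝ} (h : 1 < x) : HasDerivAt g 8 x := by
  have h8 : HasDerivAt (fun y : ℝ => 4 * (2 * y - 1)) 8 x :=
    ((((hasDerivAt_id x).const_mul (2 : ℝ)).sub_const 1).const_mul (4 : ℝ)).congr_deriv
      (by norm_num)
  exact h8.congr_of_eventuallyEq <| by
    filter_upwards [Ioi_mem_nhds h] with y hy using g_of_one_lt hy

lemma integral_Ioi_zero_mul_g {f : ℝ → ℝ} (hf : IntegrableOn (fun x => f x * g x) (Ioi 0)) :
    ∫ x in Ioi (0 : ℝ), f x * g x =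
      4 * (∫ x in (0 : ℝ)..1, f x) + ∫ x in Ioi (1 : ℝ), f x * g x := by
  have hIoc : ∫ x in Ioc (0 : ℝ) 1, f x * g x = 4 * ∫ x in (0 : ℝ)..1, f x := by
    rw [intervalIntegral.integral_of_le zero_le_one, ← integral_const_mul]
    refine setIntegral_congr_fun measurableSet_Ioc fun x hx => ?_
    simp only [g_of_le hx.2, mul_comm]
  rw [← hIoc, ← setIntegral_union (Ioc_disjoint_Ioi le_rfl) measurableSet_Ioi
    (hf.mono_set Ioc_subset_Ioi_self) (hf.mono_set (Ioi_subset_Ioi zero_le_one)),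
    Ioc_union_Ioi_eq_Ioi zero_le_one]

/-- For `G' = λ w u` and `G = w u'`, the cross terms `2 G G'` and `2λ (w u) w u'` cancel. -/
lemma HasDerivAt.sq_sub_mul_sq {G u w : ℝ → ℝ} {lam u' w' x : ℝ}
    (hG : HasDerivAt G (lam * w x * u x) x) (hu : HasDerivAt u u' x) (hw : HasDerivAt w w' x)
    (hGx : G x = w x * u') :
    HasDerivAt (fun y => G y ^ 2 - lam * (w y * u y) ^ 2) (-(2 * lam * w' * w x * u x ^ 2)) x :=
  ((hG.pow 2).sub (((hw.mul hu).pow 2).const_mul lam)).congr_deriv <| by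
    simp only [Pi.mul_apply, hGx]; ring

noncomputable def pohozaev (lam : ℝ) (G u : ℝ → ℝ) (x : ℝ) : ℝ :=
  G x ^ 2 - lam * (g x * u x) ^ 2

section Pohozaev

variable {lam : ℝ} {G u : ℝ → ℝ}

lemma continuousOn_pohozaev (hu : ContinuousOn u (Ici 0)) (hG : ContinuousOn G (Ici 0)) :
    ContinuousOn (pohozaev lam G u) (Ici 0) :=
  (hG.pow 2).sub (continuousOn_const.mul ((continuous_g.continuousOn.mul hu).pow 2))

variable (hu : ContinuousOn u (Ici 0)) (hdiff : DifferentiableOn ℝ u (Ioi 0))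
  (hGcont : ContinuousOn G (Ici 0)) (hGeq : ∀ x ∈ Ioi (0 : ℝ), G x = g x * deriv u x)
  (hode : ∀ x ∈ Ioo (0 : ℝ) 1 ∪ Ioi 1, HasDerivAt G (lam * g x * u x) x)
include hu hdiff hGcont hGeq hode

lemma pohozaev_one_eq_pohozaev_zero : pohozaev lam G u 1 = pohozaev lam G u 0 := by
  have hderiv : ∀ x ∈ Ioo (0 : ℝ) 1, HasDerivAt (pohozaev lam G u) 0 x := fun x hx => by
    have hux := (hdiff.differentiableAt (Ioi_mem_nhds hx.1)).hasDerivAt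
    exact ((hode x (Or.inl hx)).sq_sub_mul_sq hux (hasDerivAt_g_of_lt_one hx.2)
      (hGeq x hx.1)).congr_deriv (by ring)
  obtain ⟨c, hc, hslope⟩ := exists_hasDerivAt_eq_slope (pohozaev lam G u) (fun _ => 0)
    zero_lt_one ((continuousOn_pohozaev hu hGcont).mono Icc_subset_Ici_self) hderiv
  rw [sub_zero, div_one] at hslope
  linarith

lemma pohozaev_one_eq_integral (hint : IntegrableOn (fun x => u x ^ 2 * g x) (Ioi 1))
    (hdecay : Tendsto (fun x => g x * u x) atTop (𝓝 0)) (hdecay' : Tendsto G atTop (𝓝 0)) :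
    pohozaev lam G u 1 = 16 * lam * ∫ x in Ioi (1 : ℝ), u x ^ 2 * g x := by
  have hderiv : ∀ x ∈ Ioi (1 : ℝ),
      HasDerivAt (pohozaev lam G u) (-(16 * lam) * (u x ^ 2 * g x)) x := fun x hx => by
    have hx0 : (0 : ℝ) < x := zero_lt_one.trans hx
    have hux := (hdiff.differentiableAt (Ioi_mem_nhds hx0)).hasDerivAt
    exact ((hode x (Or.inr hx)).sq_sub_mul_sq hux (hasDerivAt_g_of_one_lt hx)
      (hGeq x hx0)).congr_deriv (by ring)
  have hlim : Tendsto (pohozaev lam G u) atTop (𝓝 0) := by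
    unfold pohozaev
    simpa using (hdecay'.pow 2).sub ((hdecay.pow 2).const_mul lam)
  have hftc := integral_Ioi_of_hasDerivAt_of_tendsto
    ((continuousOn_pohozaev hu hGcont 1 (mem_Ici.2 zero_le_one)).mono
      (Ici_subset_Ici.2 zero_le_one))
    hderiv (hint.const_mul _) hlim
  rw [integral_const_mul] at hftc
  linarith

end Pohozaev

lemma flux_zero_eq_of_hasDerivWithinAt {u G : ℝ → ℝ} {m : ℝ} (hu : ContinuousOn u (Ici 0))
    (hdiff : DifferentiableOn ℝ u (Ioi 0)) (hGcont : ContinuousOn G (Ici 0))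
    (hGeq : ∀ x ∈ Ioi (0 : ℝ), G x = g x * deriv u x) (hm : HasDerivWithinAt u m (Ici 0) 0) :
    G 0 = 4 * m := by
  have hlim : Tendsto (deriv u) (𝓝[>] 0) (𝓝 (G 0 / 4)) := by
    refine (((hGcont 0 self_mem_Ici).mono Ioi_subset_Ici_self).tendsto.div_const 4).congr' ?_
    filter_upwards [Ioo_mem_nhdsGT (zero_lt_one' ℝ)] with x hx
    rw [hGeq x hx.1, g_of_le hx.2.le]
    ring
  have h := hasDerivWithinAt_Ici_of_tendsto_deriv hdiff
    ((hu 0 self_mem_Ici).mono Ioi_subset_Ici_self) self_mem_nhdsWithin hlim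
  rw [(uniqueDiffOn_Ici (0 : ℝ) 0 self_mem_Ici).eq_deriv _ hm h]
  ring

theorem stmt17_general (q α lam : ℝ)
    (u : ℝ → ℝ)
    (hcont : ContinuousOn u (Ici 0)) (hpos : ∀ x : ℝ, 0 ≤ x → 0 < u x)
    (hC1 : ContDiffOn ℝ 1 u (Ioi 0))
    (hint : IntegrableOn (fun x => (u x) ^ 2 * g x) (Ioi 0))
    (G : ℝ → ℝ) (hGcont : ContinuousOn G (Ici 0))
    (hGeq : ∀ x ∈ Ioi (0 : ℝ), G x = g x * deriv u x)
    (hode : ∀ x ∈ Ioo (0 : ℝ) 1 ∪ Ioi 1, HasDerivAt G (lam * g x * u x) x)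
    (m : ℝ) (hm : HasDerivWithinAt u m (Ici 0) 0)
    (hbc : 4 * m = -α * u 0 ^ (q - 1))
    (hdecay : Filter.Tendsto (fun x => g x * u x) Filter.atTop (nhds 0))
    (hdecay' : Filter.Tendsto G Filter.atTop (nhds 0)) :
    α ^ 2 / 16 * u 0 ^ (2 * q - 2) =
      lam * (u 0) ^ 2 + lam * (∫ x in Ioi (0 : ℝ), (u x) ^ 2 * g x)
        - 4 * lam * ∫ x in (0 : ℝ)..1, (u x) ^ 2 := by
  have hdiff : DifferentiableOn ℝ u (Ioi 0) := hC1.differentiableOn one_ne_zero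
  have hG0 := flux_zero_eq_of_hasDerivWithinAt hcont hdiff hGcont hGeq hm
  have hP0 : pohozaev lam G u 0 = α ^ 2 * u 0 ^ (2 * q - 2) - 16 * lam * u 0 ^ 2 := by
    have hpow : (u 0 ^ (q - 1)) ^ 2 = u 0 ^ (2 * q - 2) := by
      rw [← Real.rpow_natCast, ← Real.rpow_mul (hpos 0 le_rfl).le]
      ring_nf
    rw [pohozaev, hG0, hbc, g_of_le zero_le_one, ← hpow]
    ring
  have hP1 := pohozaev_one_eq_integral hcont hdiff hGcont hGeq hode
    (hint.mono_set (Ioi_subset_Ioi zero_le_one)) hdecay hdecay'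
  rw [pohozaev_one_eq_pohozaev_zero hcont hdiff hGcont hGeq hode, hP0] at hP1
  rw [integral_Ioi_zero_mul_g hint]
  linarith

/-- Pohozaev-type identity for positive solutions of `(g u')' = λ g u` on the
weighted half-line with boundary condition `4u'(0⁺) = −α u(0)^{q−1}` and
vanishing of `g u` and `g u'` at infinity:
`(α²/16)u(0)^{2q−2} = λu(0)² + λ∫₀^∞ u² g − 4λ∫₀¹ u²`. -/
theorem stmt17 (q α lam : ℝ) (hq : 2 < q) (hq' : q < 4) (hα : 0 < α)
    (u : ℝ → ℝ)
    (hcont : ContinuousOn u (Ici 0)) (hpos : ∀ x : ℝ, 0 ≤ x → 0 < u x)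
    (hC1 : ContDiffOn ℝ 1 u (Ioi 0))
    (hint : IntegrableOn (fun x => (u x) ^ 2 * g x) (Ioi 0))
    (hint' : IntegrableOn (fun x => (deriv u x) ^ 2 * g x) (Ioi 0))
    (G : ℝ → ℝ) (hGcont : ContinuousOn G (Ici 0))
    (hGeq : ∀ x ∈ Ioi (0 : ℝ), G x = g x * deriv u x)
    (hode : ∀ x ∈ Ioo (0 : ℝ) 1 ∪ Ioi 1, HasDerivAt G (lam * g x * u x) x)
    (m : ℝ) (hm : HasDerivWithinAt u m (Ici 0) 0)
    (hbc : 4 * m = -α * u 0 ^ (q - 1))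
    (hdecay : Filter.Tendsto (fun x => g x * u x) Filter.atTop (nhds 0))
    (hdecay' : Filter.Tendsto G Filter.atTop (nhds 0)) :
    α ^ 2 / 16 * u 0 ^ (2 * q - 2) =
      lam * (u 0) ^ 2 + lam * (∫ x in Ioi (0 : ℝ), (u x) ^ 2 * g x)
        - 4 * lam * ∫ x in (0 : ℝ)..1, (u x) ^ 2 :=
  stmt17_general q α lam u hcont hpos hC1 hint G hGcont hGeq hode m hm hbc hdecay hdecay'
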